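/- For any bi-infinite word x over a finite alphabet A and any letter ℓ ∈ A, x is dendric if and only if L_ℓ(x) is dendric, if and only if R_ℓ(x) is dendric. Consequently, a non-erasing morphism τ : A* → B* is dendric preserving if and only if L_ℓ∘τ is (equivalently, if and only if R_ℓ∘τ is), where L_ℓ, R_ℓ are the Arnoux–Rauzy morphisms over B for ℓ ∈ B. -/

import Mathlib

open List

variable {A : Type*} {B : Type*} {C : Type*}

/-- `w` is a factor of the bi-infinite word `x`. -/
def IsFactor (x : ℤ → A) (w : List A) : Prop :=
  ∃ i : ℤ, ∀ j : Fin w.length, x (i + (j : ℕ)) = w.get j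

/-- Left extensions `E⁻_x(w)`. -/
def extL (x : ℤ → A) (w : List A) : Set A := {a | IsFactor x (a :: w)}

/-- Right extensions `E⁺_x(w)`. -/
def extR (x : ℤ → A) (w : List A) : Set A := {b | IsFactor x (w ++ [b])}

/-- Bi-extensions `E_x(w)`. -/
def extB (x : ℤ → A) (w : List A) : Set (A × A) :=
  {p | IsFactor x (p.1 :: (w ++ [p.2]))}

/-- The multiplicity `m_x(w)`. -/
noncomputable def mult (x : ℤ → A) (w : List A) : ℤ :=
  ((extB x w).ncard : ℤ) - (extL x w).ncard - (extR x w).ncard + 1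

/-- The extension graph `𝓔_x(w)`: bipartite graph on the disjoint union of
`E⁻_x(w)` and `E⁺_x(w)`, with an edge between left vertex `a` and right vertex `b`
iff `(a, b) ∈ E_x(w)`. -/
def extGraph (x : ℤ → A) (w : List A) :
    SimpleGraph ({a : A // a ∈ extL x w} ⊕ {b : A // b ∈ extR x w}) :=
  SimpleGraph.fromRel fun u v =>
    ∃ (a : {a : A // a ∈ extL x w}) (b : {b : A // b ∈ extR x w}),
      u = Sum.inl a ∧ v = Sum.inr b ∧ (a.1, b.1) ∈ extB x w

/-- The factor complexity `p_x(n)`. -/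
noncomputable def cplx (x : ℤ → A) (n : ℕ) : ℕ :=
  Set.ncard {w : List A | IsFactor x w ∧ w.length = n}

/-- Application of a morphism (given by its values on letters) to a finite word. -/
def appw (σ : A → List B) (w : List A) : List B := (w.map σ).flatten

/-- `y` is the image of the bi-infinite word `x` under the (non-erasing) morphism `σ`,
i.e. `y = ⋯σ(x_{-1})σ(x_0)σ(x_1)⋯`, anchored so that `σ(x_0)` starts at position `0`. -/
def IsImage (σ : A → List B) (x : ℤ → A) (y : ℤ → B) : Prop :=
  ∃ t : ℤ → ℤ, t 0 = 0 ∧ (∀ n : ℤ, t (n + 1) = t n + (σ (x n)).length) ∧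
    ∀ (n : ℤ) (j : Fin (σ (x n)).length), y (t n + (j : ℕ)) = (σ (x n)).get j

/-- The width `‖σ‖` of a morphism. -/
noncomputable def width [Fintype A] (σ : A → List B) : ℕ :=
  Finset.univ.sup fun a => (σ a).length

/-- A factor `w` of `x` is dendric if its extension graph is a tree. -/
def Dendric (x : ℤ → A) (w : List A) : Prop := (extGraph x w).IsTree

/-- A bi-infinite word is dendric if all its factors are dendric. -/
def DendricWord (x : ℤ → A) : Prop := ∀ w, IsFactor x w → Dendric x w

/-- `σ` is dendric preserving: the image of every dendric bi-infinite word over `A`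
is dendric. -/
def DendricPreserving (σ : A → List B) : Prop :=
  ∀ x : ℤ → A, Function.Surjective x → DendricWord x →
    ∀ y : ℤ → B, IsImage σ x y → DendricWord y

/-- The Arnoux–Rauzy morphism `L_ℓ : ℓ ↦ ℓ, a ↦ ℓa (a ≠ ℓ)`. -/
def ARL [DecidableEq A] (ℓ : A) : A → List A := fun a => if a = ℓ then [ℓ] else [ℓ, a]

/-- The Arnoux–Rauzy morphism `R_ℓ : ℓ ↦ ℓ, a ↦ aℓ (a ≠ ℓ)`. -/
def ARR [DecidableEq A] (ℓ : A) : A → List A := fun a => if a = ℓ then [ℓ] else [a, ℓ]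

/-- Composition of morphisms (given by their values on letters): `mcomp σ τ = σ ∘ τ`. -/
def mcomp (σ : B → List C) (τ : A → List B) : A → List C := fun a => ((τ a).map σ).flatten

section Graph

open SimpleGraph

variable {V : Type*}

/-- In a cycle through `w`, the vertex `w` has two distinct neighbours. -/
lemma cycle_two_nbrs {G : SimpleGraph V} {w : V} {q : G.Walk w w} (hq : q.IsCycle) :
    ∃ u₁ u₂, u₁ ≠ u₂ ∧ G.Adj w u₁ ∧ G.Adj w u₂ := by
  cases q with
  | nil => exact absurd hq SimpleGraph.Walk.IsCycle.not_of_nil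
  | @cons _ v₁ _ h r =>
    obtain ⟨hpath, hnotmem⟩ := (SimpleGraph.Walk.cons_isCycle_iff r h).1 hq
    have hrl : 2 ≤ r.length := by
      have := hq.three_le_length
      simp only [SimpleGraph.Walk.length_cons] at this
      omega
    have hnn : ¬ r.reverse.Nil := by
      rw [SimpleGraph.Walk.nil_iff_length_eq, SimpleGraph.Walk.length_reverse]
      omega
    obtain ⟨v₂, h₂, r₂, hr₂⟩ := SimpleGraph.Walk.not_nil_iff.1 hnn
    refine ⟨v₁, v₂, ?_, h, h₂⟩
    rintro rfl
    apply hnotmem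
    have : s(w, v₁) ∈ r.reverse.edges := by
      rw [hr₂, SimpleGraph.Walk.edges_cons]
      exact List.mem_cons_self
    rw [SimpleGraph.Walk.edges_reverse, List.mem_reverse] at this
    exact this

lemma exists_third {l : List V} (hn : l.Nodup) (hlen : 3 ≤ l.length) (c d : V) :
    ∃ w ∈ l, w ≠ c ∧ w ≠ d := by
  rcases l with _ | ⟨a, _ | ⟨b, _ | ⟨e, rest⟩⟩⟩ <;> simp only [List.length] at hlen <;>
    try omega
  simp only [List.nodup_cons, List.mem_cons, not_or] at hn
  obtain ⟨⟨hab, hae, -⟩, ⟨hbe, -⟩, -⟩ := hn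
  by_cases h1 : a ≠ c ∧ a ≠ d
  · exact ⟨a, by simp, h1.1, h1.2⟩
  by_cases h2 : b ≠ c ∧ b ≠ d
  · exact ⟨b, by simp, h2.1, h2.2⟩
  rw [not_and_or, not_not, not_not] at h1 h2
  refine ⟨e, by simp, ?_, ?_⟩ <;> rintro rfl <;>
    rcases h1 with rfl | rfl <;> rcases h2 with rfl | rfl <;> simp_all

/-- If every edge is incident to `c` or `d`, and (when `c ≠ d`) no vertex is adjacent
to both `c` and `d`, then the graph is acyclic. -/
lemma acyclic_two_hubs {G : SimpleGraph V} (c d : V)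
    (hE : ∀ u v, G.Adj u v → u = c ∨ u = d ∨ v = c ∨ v = d)
    (hcd : c ≠ d → ∀ w, G.Adj w c → G.Adj w d → False) : G.IsAcyclic := by
  classical
  intro v p hp
  have h3 : 3 ≤ p.support.tail.length := by
    have := hp.three_le_length
    have := p.length_support
    simp only [List.length_tail, this]
    omega
  obtain ⟨w, hwmem, hwc, hwd⟩ := exists_third hp.support_nodup h3 c d
  have hwsup : w ∈ p.support := List.mem_of_mem_tail hwmem
  have hq := hp.rotate hwsup
  obtain ⟨u₁, u₂, hne, h1, h2⟩ := cycle_two_nbrs hq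
  have e1 := hE w u₁ h1
  have e2 := hE w u₂ h2
  have e1' : u₁ = c ∨ u₁ = d := by
    rcases e1 with h | h | h | h
    exacts [absurd h hwc, absurd h hwd, Or.inl h, Or.inr h]
  have e2' : u₂ = c ∨ u₂ = d := by
    rcases e2 with h | h | h | h
    exacts [absurd h hwc, absurd h hwd, Or.inl h, Or.inr h]
  rcases e1' with rfl | rfl <;> rcases e2' with rfl | rfl
  · exact hne rfl
  · rcases eq_or_ne u₁ u₂ with rfl | hne2
    · exact hne rfl
    · exact hcd hne2 w h1 h2
  · rcases eq_or_ne u₂ u₁ with rfl | hne2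
    · exact hne rfl
    · exact hcd hne2 w h2 h1
  · exact hne rfl


end Graph

section ExtGraph

variable {A : Type*}

lemma extGraph_adj {x : ℤ → A} {w : List A}
    {u v : {a : A // a ∈ extL x w} ⊕ {b : A // b ∈ extR x w}} :
    (extGraph x w).Adj u v ↔ u ≠ v ∧
      ((∃ a b, u = Sum.inl a ∧ v = Sum.inr b ∧ (a.1, b.1) ∈ extB x w) ∨
       (∃ a b, v = Sum.inl a ∧ u = Sum.inr b ∧ (a.1, b.1) ∈ extB x w)) :=
  SimpleGraph.fromRel_adj _ u v

lemma dendric_congr {x y : ℤ → A} {v w : List A} (h1 : extL x v = extL y w)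
    (h2 : extR x v = extR y w) (h3 : extB x v = extB y w) :
    Dendric x v ↔ Dendric y w := by
  unfold Dendric extGraph
  rw [h1, h2, h3]

lemma dendric_star_left {x : ℤ → A} {w : List A} {ℓ : A} (hL : extL x w = {ℓ})
    (hB : extB x w = {ℓ} ×ˢ extR x w) (hR : (extR x w).Nonempty) : Dendric x w := by
  have hℓ : ℓ ∈ extL x w := by rw [hL]; rfl
  set c : ({a : A // a ∈ extL x w} ⊕ {b : A // b ∈ extR x w}) := Sum.inl ⟨ℓ, hℓ⟩ with hc
  have hinl : ∀ a : {a : A // a ∈ extL x w}, a = ⟨ℓ, hℓ⟩ := by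
    rintro ⟨a, ha⟩
    rw [hL] at ha
    exact Subtype.ext ha
  have hadj : ∀ b : {b : A // b ∈ extR x w}, (extGraph x w).Adj c (Sum.inr b) := by
    intro b
    rw [extGraph_adj]
    exact ⟨by simp [hc], Or.inl ⟨⟨ℓ, hℓ⟩, b, rfl, rfl, by rw [hB]; exact ⟨rfl, b.2⟩⟩⟩
  have hhub : ∀ u v, (extGraph x w).Adj u v → u = c ∨ v = c := by
    intro u v huv
    rw [extGraph_adj] at huv
    rcases huv.2 with ⟨a, b, rfl, rfl, -⟩ | ⟨a, b, rfl, rfl, -⟩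
    · exact Or.inl (by rw [hinl a])
    · exact Or.inr (by rw [hinl a])
  have hreach : ∀ u, (extGraph x w).Reachable u c := by
    rintro (a | b)
    · rw [hinl a]
    · exact (hadj b).symm.reachable
  constructor
  · haveI : Nonempty ({a : A // a ∈ extL x w} ⊕ {b : A // b ∈ extR x w}) := ⟨c⟩
    exact ⟨fun u v => (hreach u).trans (hreach v).symm⟩
  · apply acyclic_two_hubs c c
    · intro u v huv
      rcases hhub u v huv with h | h
      · exact Or.inl h
      · exact Or.inr (Or.inr (Or.inl h))
    · exact fun h => absurd rfl h

lemma dendric_star_right {x : ℤ → A} {w : List A} {ℓ : A} (hR : extR x w = {ℓ})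
    (hB : extB x w = extL x w ×ˢ {ℓ}) (hL : (extL x w).Nonempty) : Dendric x w := by
  have hℓ : ℓ ∈ extR x w := by rw [hR]; rfl
  set c : ({a : A // a ∈ extL x w} ⊕ {b : A // b ∈ extR x w}) := Sum.inr ⟨ℓ, hℓ⟩ with hc
  have hinr : ∀ b : {b : A // b ∈ extR x w}, b = ⟨ℓ, hℓ⟩ := by
    rintro ⟨b, hb⟩
    rw [hR] at hb
    exact Subtype.ext hb
  have hadj : ∀ a : {a : A // a ∈ extL x w}, (extGraph x w).Adj (Sum.inl a) c := by
    intro a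
    rw [extGraph_adj]
    exact ⟨by simp [hc], Or.inl ⟨a, ⟨ℓ, hℓ⟩, rfl, rfl, by rw [hB]; exact ⟨a.2, rfl⟩⟩⟩
  have hhub : ∀ u v, (extGraph x w).Adj u v → u = c ∨ v = c := by
    intro u v huv
    rw [extGraph_adj] at huv
    rcases huv.2 with ⟨a, b, rfl, rfl, -⟩ | ⟨a, b, rfl, rfl, -⟩
    · exact Or.inr (by rw [hinr b])
    · exact Or.inl (by rw [hinr b])
  have hreach : ∀ u, (extGraph x w).Reachable u c := by
    rintro (a | b)
    · exact (hadj a).reachable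
    · rw [hinr b]
  constructor
  · haveI : Nonempty ({a : A // a ∈ extL x w} ⊕ {b : A // b ∈ extR x w}) := ⟨c⟩
    exact ⟨fun u v => (hreach u).trans (hreach v).symm⟩
  · apply acyclic_two_hubs c c
    · intro u v huv
      rcases hhub u v huv with h | h
      · exact Or.inl h
      · exact Or.inr (Or.inr (Or.inl h))
    · exact fun h => absurd rfl h

lemma dendric_double_star {x : ℤ → A} {w : List A} {ℓ : A}
    (hL : extL x w = Set.univ) (hR : extR x w = Set.univ)
    (hB : extB x w = {p : A × A | p.1 = ℓ ∨ p.2 = ℓ}) : Dendric x w := by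
  have hℓL : ℓ ∈ extL x w := by rw [hL]; trivial
  have hℓR : ℓ ∈ extR x w := by rw [hR]; trivial
  set c : ({a : A // a ∈ extL x w} ⊕ {b : A // b ∈ extR x w}) := Sum.inl ⟨ℓ, hℓL⟩ with hc
  set d : ({a : A // a ∈ extL x w} ⊕ {b : A // b ∈ extR x w}) := Sum.inr ⟨ℓ, hℓR⟩ with hd
  have hadjc : ∀ b : {b : A // b ∈ extR x w}, (extGraph x w).Adj c (Sum.inr b) := by
    intro b
    rw [extGraph_adj]
    exact ⟨by simp [hc], Or.inl ⟨⟨ℓ, hℓL⟩, b, rfl, rfl, by rw [hB]; exact Or.inl rfl⟩⟩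
  have hadjd : ∀ a : {a : A // a ∈ extL x w}, (extGraph x w).Adj (Sum.inl a) d := by
    intro a
    rw [extGraph_adj]
    exact ⟨by simp [hd], Or.inl ⟨a, ⟨ℓ, hℓR⟩, rfl, rfl, by rw [hB]; exact Or.inr rfl⟩⟩
  have hreach : ∀ u, (extGraph x w).Reachable u c := by
    rintro (a | b)
    · exact ((hadjd a).reachable).trans ((hadjc ⟨ℓ, hℓR⟩).symm.reachable)
    · exact (hadjc b).symm.reachable
  constructor
  · haveI : Nonempty ({a : A // a ∈ extL x w} ⊕ {b : A // b ∈ extR x w}) := ⟨c⟩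
    exact ⟨fun u v => (hreach u).trans (hreach v).symm⟩
  · apply acyclic_two_hubs c d
    · intro u v huv
      rw [extGraph_adj] at huv
      rcases huv.2 with ⟨a, b, rfl, rfl, hab⟩ | ⟨a, b, rfl, rfl, hab⟩
      · rw [hB] at hab
        rcases hab with h | h
        · exact Or.inl (by rw [hc]; congr 1; exact Subtype.ext h)
        · exact Or.inr (Or.inr (Or.inr (by rw [hd]; congr 1; exact Subtype.ext h)))
      · rw [hB] at hab
        rcases hab with h | h
        · exact Or.inr (Or.inr (Or.inl (by rw [hc]; congr 1; exact Subtype.ext h)))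
        · exact Or.inr (Or.inl (by rw [hd]; congr 1; exact Subtype.ext h))
    · rintro - (a | b) h1 h2
      · rw [extGraph_adj] at h1
        rcases h1.2 with ⟨a', b', -, h, -⟩ | ⟨a', b', -, h, -⟩
        · rw [hc] at h; cases h
        · cases h
      · rw [extGraph_adj] at h2
        rcases h2.2 with ⟨a', b', h, -, -⟩ | ⟨a', b', h, -, -⟩
        · cases h
        · rw [hd] at h; cases h

end ExtGraph
section Basics

variable {A : Type*} {B : Type*} {C : Type*}

/-- `w` occurs in `x` at position `i`. -/
def FactorAt (x : ℤ → A) (i : ℤ) (w : List A) : Prop :=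
  ∀ j : Fin w.length, x (i + (j : ℕ)) = w.get j

lemma isFactor_iff {x : ℤ → A} {w : List A} : IsFactor x w ↔ ∃ i, FactorAt x i w :=
  Iff.rfl

lemma factorAt_iff {x : ℤ → A} {i : ℤ} {w : List A} :
    FactorAt x i w ↔ ∀ (j : ℕ) (h : j < w.length), x (i + j) = w[j] := by
  constructor
  · intro hf j h
    exact hf ⟨j, h⟩
  · intro hf j
    exact hf j j.2

lemma factorAt_nil {x : ℤ → A} {i : ℤ} : FactorAt x i ([] : List A) := by
  intro j
  exact absurd j.2 (by simp)

lemma factorAt_append {x : ℤ → A} {i : ℤ} {u v : List A} :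
    FactorAt x i (u ++ v) ↔ FactorAt x i u ∧ FactorAt x (i + u.length) v := by
  simp only [factorAt_iff]
  constructor
  · intro h
    refine ⟨fun j hj => ?_, fun j hj => ?_⟩
    · have := h j (by simp; omega)
      rwa [List.getElem_append_left hj] at this
    · have := h (u.length + j) (by simp; omega)
      rw [List.getElem_append_right (by omega)] at this
      simpa [add_assoc, Nat.add_sub_cancel_left] using this
  · rintro ⟨h1, h2⟩ j hj
    rcases Nat.lt_or_ge j u.length with hj' | hj'
    · rw [List.getElem_append_left hj']
      exact h1 j hj'
    · rw [List.getElem_append_right (by omega)]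
      have := h2 (j - u.length) (by simp at hj; omega)
      rw [← this]
      congr 1
      omega

lemma factorAt_singleton {x : ℤ → A} {i : ℤ} {a : A} :
    FactorAt x i [a] ↔ x i = a := by
  rw [factorAt_iff]
  constructor
  · intro h
    simpa using h 0 (by simp)
  · intro h j hj
    simp only [List.length_singleton] at hj
    have hj0 : j = 0 := by omega
    subst hj0
    simpa using h

lemma factorAt_cons {x : ℤ → A} {i : ℤ} {a : A} {w : List A} :
    FactorAt x i (a :: w) ↔ x i = a ∧ FactorAt x (i + 1) w := by
  have : a :: w = [a] ++ w := rfl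
  rw [this, factorAt_append, factorAt_singleton]
  norm_num

lemma FactorAt.isFactor {x : ℤ → A} {i : ℤ} {w : List A} (h : FactorAt x i w) :
    IsFactor x w := ⟨i, h⟩

/-- `appw` of a cons. -/
lemma appw_cons (σ : A → List B) (a : A) (w : List A) :
    appw σ (a :: w) = σ a ++ appw σ w := by
  simp [appw]

lemma appw_nil (σ : A → List B) : appw σ ([] : List A) = [] := rfl

end Basics

section Image

variable {A : Type*} {B : Type*} {C : Type*}

variable {σ : A → List B} {x : ℤ → A} {y : ℤ → B} {t : ℤ → ℤ}

/-- Properties of the anchoring function. -/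
structure Anchor (σ : A → List B) (x : ℤ → A) (y : ℤ → B) (t : ℤ → ℤ) : Prop where
  zero : t 0 = 0
  step : ∀ n : ℤ, t (n + 1) = t n + (σ (x n)).length
  img : ∀ n : ℤ, FactorAt y (t n) (σ (x n))

lemma isImage_iff_anchor : IsImage σ x y ↔ ∃ t, Anchor σ x y t := by
  constructor
  · rintro ⟨t, h0, hs, hi⟩
    exact ⟨t, h0, hs, fun n => hi n⟩
  · rintro ⟨t, h0, hs, hi⟩
    exact ⟨t, h0, hs, fun n => hi n⟩

lemma one_le_len' (hσ : ∀ a : A, σ a ≠ []) (a : A) : 1 ≤ ((σ a).length : ℤ) := by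
  have := List.length_pos_iff.2 (hσ a)
  omega

namespace Anchor

variable (ha : Anchor σ x y t) (hσ : ∀ a, σ a ≠ [])
include ha


include hσ in
lemma strictMono : StrictMono t := by
  apply strictMono_int_of_lt_succ
  intro n
  rw [ha.step]
  have := one_le_len' hσ (x n)
  omega

include hσ in
lemma le_self {n : ℤ} (hn : n ≤ 0) : t n ≤ n := by
  obtain ⟨k, rfl⟩ : ∃ k : ℕ, n = -(k : ℤ) := ⟨(-n).toNat, by omega⟩
  clear hn
  induction k with
  | zero => simp [ha.zero]
  | succ m ih =>
    have hstep := ha.step (-(m + 1 : ℕ))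
    have h1 := one_le_len' hσ (x (-(m + 1 : ℕ)))
    have : (-(m+1:ℕ) : ℤ) + 1 = -(m : ℕ) := by push_cast; ring
    rw [this] at hstep
    omega

include hσ in
lemma self_le {n : ℤ} (hn : 0 ≤ n) : n ≤ t n := by
  obtain ⟨k, rfl⟩ : ∃ k : ℕ, n = (k : ℤ) := ⟨n.toNat, by omega⟩
  clear hn
  induction k with
  | zero => simp [ha.zero]
  | succ m ih =>
    have hstep := ha.step (m : ℕ)
    have h1 := one_le_len' hσ (x (m : ℕ))
    push_cast
    push_cast at ih hstep
    omega

include hσ in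
/-- Every position lies in a unique block. -/
lemma partition (p : ℤ) : ∃ n, t n ≤ p ∧ p < t (n + 1) := by
  obtain ⟨n, hn, hmax⟩ := Int.exists_greatest_of_bdd
    (P := fun z => t z ≤ p)
    ⟨max p 0, by
      intro z hz
      rcases le_or_gt z 0 with h | h
      · omega
      · have := ha.self_le hσ h.le
        omega⟩
    ⟨min p 0, by
      have := ha.le_self hσ (min_le_right p 0)
      have := min_le_left p 0
      omega⟩
  refine ⟨n, hn, ?_⟩
  by_contra hcon
  have := hmax (n + 1) (by omega)
  omega

include hσ in
lemma partition_unique {p : ℤ} {n m : ℤ} (hn : t n ≤ p ∧ p < t (n + 1))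
    (hm : t m ≤ p ∧ p < t (m + 1)) : n = m := by
  by_contra hne
  rcases lt_or_gt_of_ne hne with h | h
  · have := (ha.strictMono hσ).monotone (by omega : n + 1 ≤ m)
    omega
  · have := (ha.strictMono hσ).monotone (by omega : m + 1 ≤ n)
    omega

/-- The image of an aligned factor. -/
lemma factor_image : ∀ (v : List A) (n : ℤ), FactorAt x n v →
    FactorAt y (t n) (appw σ v) ∧ t (n + v.length) = t n + (appw σ v).length := by
  intro v
  induction v with
  | nil =>
    intro n _
    simpa [appw_nil] using factorAt_nil
  | cons a v ih =>
    intro n hf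
    rw [factorAt_cons] at hf
    obtain ⟨hxa, hrest⟩ := hf
    obtain ⟨h1, h2⟩ := ih (n + 1) hrest
    rw [appw_cons]
    constructor
    · rw [factorAt_append]
      refine ⟨by rw [← hxa]; exact ha.img n, ?_⟩
      rw [← hxa, ← ha.step n]
      exact h1
    · have hstep := ha.step n
      have hlen : ((a :: v).length : ℤ) = 1 + v.length := by simp; ring
      rw [List.length_append]
      have : n + ((a :: v).length : ℤ) = (n + 1) + v.length := by rw [hlen]; ring
      rw [this, h2, hstep, hxa]
      push_cast
      ring

end Anchor

end Image
section Image2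

variable {A : Type*} {B : Type*} {C : Type*}
variable {σ : A → List B} {τ : C → List A} {x : ℤ → A} {y : ℤ → B} {t : ℤ → ℤ}

/-- Anchor functions only: the skeleton. -/
structure Preanchor (σ : A → List B) (x : ℤ → A) (t : ℤ → ℤ) : Prop where
  zero : t 0 = 0
  step : ∀ n : ℤ, t (n + 1) = t n + (σ (x n)).length

lemma Anchor.pre (ha : Anchor σ x y t) : Preanchor σ x t := ⟨ha.zero, ha.step⟩

namespace Preanchor

variable (pa : Preanchor σ x t) (hσ : ∀ a, σ a ≠ [])
include pa hσ

lemma strictMono : StrictMono t := by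
  apply strictMono_int_of_lt_succ
  intro n
  rw [pa.step]
  have := one_le_len' hσ (x n)
  omega

lemma le_self {n : ℤ} (hn : n ≤ 0) : t n ≤ n := by
  obtain ⟨k, rfl⟩ : ∃ k : ℕ, n = -(k : ℤ) := ⟨(-n).toNat, by omega⟩
  clear hn
  induction k with
  | zero => simp [pa.zero]
  | succ m ih =>
    have hstep := pa.step (-(m + 1 : ℕ))
    have h1 := one_le_len' hσ (x (-(m + 1 : ℕ)))
    have : (-(m+1:ℕ) : ℤ) + 1 = -(m : ℕ) := by push_cast; ring
    rw [this] at hstep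
    omega

lemma self_le {n : ℤ} (hn : 0 ≤ n) : n ≤ t n := by
  obtain ⟨k, rfl⟩ : ∃ k : ℕ, n = (k : ℤ) := ⟨n.toNat, by omega⟩
  clear hn
  induction k with
  | zero => simp [pa.zero]
  | succ m ih =>
    have hstep := pa.step (m : ℕ)
    have h1 := one_le_len' hσ (x (m : ℕ))
    push_cast
    push_cast at ih hstep
    omega

lemma partition (p : ℤ) : ∃ n, t n ≤ p ∧ p < t (n + 1) := by
  obtain ⟨n, hn, hmax⟩ := Int.exists_greatest_of_bdd
    (P := fun z => t z ≤ p)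
    ⟨max p 0, by
      intro z hz
      rcases le_or_gt z 0 with h | h
      · omega
      · have := pa.self_le hσ h.le
        omega⟩
    ⟨min p 0, by
      have := pa.le_self hσ (min_le_right p 0)
      have := min_le_left p 0
      omega⟩
  refine ⟨n, hn, ?_⟩
  by_contra hcon
  have := hmax (n + 1) (by omega)
  omega

lemma partition_unique {p : ℤ} {n m : ℤ} (hn : t n ≤ p ∧ p < t (n + 1))
    (hm : t m ≤ p ∧ p < t (m + 1)) : n = m := by
  by_contra hne
  rcases lt_or_gt_of_ne hne with h | h
  · have := (pa.strictMono hσ).monotone (by omega : n + 1 ≤ m)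
    omega
  · have := (pa.strictMono hσ).monotone (by omega : m + 1 ≤ n)
    omega

end Preanchor

lemma preanchor_unique {t t' : ℤ → ℤ} (h : Preanchor σ x t) (h' : Preanchor σ x t') :
    t = t' := by
  funext n
  induction n using Int.induction_on with
  | zero => rw [h.zero, h'.zero]
  | succ k ih => rw [h.step, h'.step, ih]
  | pred k ih =>
    have h1 := h.step (-(k:ℤ) - 1)
    have h2 := h'.step (-(k:ℤ) - 1)
    rw [sub_add_cancel] at h1 h2
    omega

/-- The image word is unique. -/
lemma image_unique (hσ : ∀ a, σ a ≠ []) {y y' : ℤ → B}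
    (h : IsImage σ x y) (h' : IsImage σ x y') : y = y' := by
  rw [isImage_iff_anchor] at h h'
  obtain ⟨t, ha⟩ := h
  obtain ⟨t', ha'⟩ := h'
  obtain rfl : t = t' := preanchor_unique ha.pre ha'.pre
  funext p
  obtain ⟨n, hn1, hn2⟩ := ha.pre.partition hσ p
  have hstep := ha.step n
  have hidx : (p - t n).toNat < (σ (x n)).length := by omega
  have hcast : p = t n + ((⟨(p - t n).toNat, hidx⟩ : Fin (σ (x n)).length) : ℕ) := by
    simp only []
    omega
  rw [hcast, ha.img n ⟨(p - t n).toNat, hidx⟩, ha'.img n ⟨(p - t n).toNat, hidx⟩]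

/-- Existence of an anchor skeleton. -/
lemma preanchor_exists (σ : A → List B) (x : ℤ → A) : ∃ t, Preanchor σ x t := by
  refine ⟨fun n => (∑ k ∈ Finset.range n.toNat, ((σ (x k)).length : ℤ)) -
      ∑ k ∈ Finset.range (-n).toNat, ((σ (x (-(k : ℤ) - 1))).length : ℤ), ?_, ?_⟩
  · simp
  · intro n
    rcases le_or_gt 0 n with h | h
    · have h1 : (n + 1).toNat = n.toNat + 1 := by omega
      have h2 : (-(n + 1)).toNat = 0 := by omega
      have h3 : (-n).toNat = 0 := by omega
      rw [h1, h2, h3, Finset.sum_range_succ]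
      have : ((n.toNat : ℤ)) = n := by omega
      rw [this]
      ring
    · have h1 : (n + 1).toNat = 0 := by omega
      have h2 : n.toNat = 0 := by omega
      have h3 : (-n).toNat = (-(n + 1)).toNat + 1 := by omega
      rw [h1, h2, h3, Finset.sum_range_succ]
      have : (-(((-(n + 1)).toNat : ℤ)) - 1) = n := by omega
      rw [this]
      ring

/-- Existence of the image word. -/
lemma image_exists (hσ : ∀ a, σ a ≠ []) (x : ℤ → A) : ∃ y, IsImage σ x y := by
  classical
  obtain ⟨t, pa⟩ := preanchor_exists σ x
  have hd : B := (σ (x 0)).head (hσ _)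
  set f : ℤ → ℤ := fun p => (pa.partition hσ p).choose with hf
  refine ⟨fun p => (σ (x (f p))).getD (p - t (f p)).toNat hd, ?_⟩
  rw [isImage_iff_anchor]
  refine ⟨t, pa.zero, pa.step, ?_⟩
  intro n j
  have hp : t n ≤ t n + (j : ℕ) ∧ t n + (j : ℕ) < t (n + 1) := by
    have := pa.step n
    have := j.2
    omega
  have hne : f (t n + (j : ℕ)) = n :=
    pa.partition_unique hσ ((pa.partition hσ (t n + (j : ℕ))).choose_spec) hp
  simp only [hne]
  have hidx : (t n + (j : ℕ) - t n).toNat = (j : ℕ) := by omega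
  rw [hidx, List.getD_eq_getElem _ _ (by simpa using j.2), List.get_eq_getElem]

/-- Composition of images. -/
lemma isImage_comp {z : ℤ → A} {x : ℤ → C} {y : ℤ → B}
    (h1 : IsImage τ x z) (h2 : IsImage σ z y) : IsImage (mcomp σ τ) x y := by
  rw [isImage_iff_anchor] at h1 h2 ⊢
  obtain ⟨t1, ha1⟩ := h1
  obtain ⟨t2, ha2⟩ := h2
  refine ⟨t2 ∘ t1, ?_, ?_, ?_⟩
  · simp [ha1.zero, ha2.zero]
  · intro n
    have himg := ha1.img n
    have := (ha2.factor_image (τ (x n)) (t1 n) himg).2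
    simp only [Function.comp_apply, ha1.step n]
    rw [this]
    rfl
  · intro n
    have himg := ha1.img n
    exact (ha2.factor_image (τ (x n)) (t1 n) himg).1

lemma mcomp_ne_nil (hσ : ∀ a : A, σ a ≠ []) (hτ : ∀ c : C, τ c ≠ []) (c : C) :
    mcomp σ τ c ≠ [] := by
  obtain ⟨a, l, hl⟩ : ∃ a l, τ c = a :: l := by
    rcases hτc : τ c with _ | ⟨a, l⟩
    · exact absurd hτc (hτ c)
    · exact ⟨a, l, rfl⟩
  have : mcomp σ τ c = σ a ++ appw σ l := by
    simp [mcomp, hl, appw]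
  rw [this]
  simp only [ne_eq, List.append_eq_nil_iff, not_and]
  intro h
  exact absurd h (hσ a)

/-- Each letter of each image block occurs in the image word. -/
lemma Anchor.letter_occurs (ha : Anchor σ x y t) {b : B} {n : ℤ} (hb : b ∈ σ (x n)) :
    ∃ p, y p = b := by
  obtain ⟨j, hj⟩ := List.mem_iff_get.1 hb
  exact ⟨t n + (j : ℕ), by rw [ha.img n j, hj]⟩

lemma IsImage.surjective {τ : A → List B} {x : ℤ → A} {y : ℤ → B}
    (h : IsImage τ x y) (hx : Function.Surjective x) (hτ : ∀ b : B, ∃ a : A, b ∈ τ a) :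
    Function.Surjective y := by
  intro b
  obtain ⟨a, hab⟩ := hτ b
  obtain ⟨n, rfl⟩ := hx a
  rw [isImage_iff_anchor] at h
  obtain ⟨t, ha⟩ := h
  exact ha.letter_occurs hab

end Image2
section ARL

variable {A : Type*} [DecidableEq A] {ℓ : A} {x y : ℤ → A} {t : ℤ → ℤ}

lemma arl_ne (ℓ : A) : ∀ a, ARL ℓ a ≠ [] := by
  intro a
  unfold ARL
  split <;> simp

lemma arl_self : ARL ℓ ℓ = [ℓ] := by simp [ARL]

lemma arl_other {a : A} (h : a ≠ ℓ) : ARL ℓ a = [ℓ, a] := by simp [ARL, h]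

namespace Anchor

variable (ha : Anchor (ARL ℓ) x y t)
include ha

lemma arl_start (n : ℤ) : y (t n) = ℓ := by
  have hi := factorAt_iff.1 (ha.img n)
  rcases eq_or_ne (x n) ℓ with h | h
  · have := hi 0 (by simp [h, arl_self])
    simpa [h, arl_self] using this
  · have := hi 0 (by simp [arl_other h])
    simpa [arl_other h] using this

lemma arl_block (n : ℤ) :
    (x n = ℓ ∧ t (n + 1) = t n + 1) ∨
    (x n ≠ ℓ ∧ t (n + 1) = t n + 2 ∧ y (t n + 1) = x n) := by
  have hs := ha.step n
  have hi := factorAt_iff.1 (ha.img n)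
  rcases eq_or_ne (x n) ℓ with h | h
  · left
    refine ⟨h, ?_⟩
    rw [h, arl_self] at hs
    simpa using hs
  · right
    refine ⟨h, ?_, ?_⟩
    · rw [arl_other h] at hs
      simpa using hs
    · have := hi 1 (by simp [arl_other h])
      simpa [arl_other h] using this

lemma arl_ell_pos {p : ℤ} (hp : y p = ℓ) : ∃ n, p = t n := by
  obtain ⟨n, h1, h2⟩ := ha.pre.partition (arl_ne ℓ) p
  rcases eq_or_lt_of_le h1 with h | h
  · exact ⟨n, h.symm⟩
  · rcases ha.arl_block n with ⟨-, hb⟩ | ⟨hne, hb, hy1⟩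
    · omega
    · have hpn : p = t n + 1 := by omega
      rw [hpn, hy1] at hp
      exact absurd hp hne

lemma arl_nonell_pos {p : ℤ} (hp : y p ≠ ℓ) :
    ∃ n, p = t n + 1 ∧ x n = y p ∧ t (n + 1) = p + 1 := by
  obtain ⟨n, h1, h2⟩ := ha.pre.partition (arl_ne ℓ) p
  rcases ha.arl_block n with ⟨-, hb⟩ | ⟨hne, hb, hy1⟩
  · have hpt : p = t n := by omega
    exact absurd (by rw [hpt]; exact ha.arl_start n) hp
  · rcases (by omega : p = t n ∨ p = t n + 1) with h | h
    · exact absurd (by rw [h]; exact ha.arl_start n) hp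
    · refine ⟨n, h, ?_, by omega⟩
      rw [h]
      exact hy1.symm

lemma arl_before (n : ℤ) : y (t n - 1) = x (n - 1) := by
  have hb := ha.arl_block (n - 1)
  rw [sub_add_cancel] at hb
  rcases hb with ⟨h, hstep⟩ | ⟨h, hstep, hy1⟩
  · have he : t n - 1 = t (n - 1) := by omega
    rw [he, ha.arl_start, h]
  · have he : t n - 1 = t (n - 1) + 1 := by omega
    rw [he, hy1]

lemma arl_decode : ∀ (v : List A) (p : ℤ),
    FactorAt y p (appw (ARL ℓ) v ++ [ℓ]) → ∃ m, p = t m ∧ FactorAt x m v := by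
  intro v
  induction v with
  | nil =>
    intro p hp
    rw [appw_nil, List.nil_append, factorAt_singleton] at hp
    obtain ⟨m, hm⟩ := ha.arl_ell_pos hp
    exact ⟨m, hm, factorAt_nil⟩
  | cons a v ih =>
    intro p hp
    rw [appw_cons, List.append_assoc, factorAt_append] at hp
    obtain ⟨h1, h2⟩ := hp
    have hmono := ha.pre.strictMono (arl_ne ℓ)
    rcases eq_or_ne a ℓ with rfl | hne
    · rw [arl_self, factorAt_singleton] at h1
      rw [arl_self] at h2
      simp only [List.length_singleton, Nat.cast_one] at h2
      obtain ⟨m, hm⟩ := ha.arl_ell_pos h1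
      obtain ⟨m', hm', hfm'⟩ := ih _ h2
      rcases ha.arl_block m with ⟨hxm, hstep⟩ | ⟨hxm, hstep, -⟩
      · have hmm : m' = m + 1 := hmono.injective (by omega)
        refine ⟨m, hm, ?_⟩
        rw [factorAt_cons]
        exact ⟨hxm, by rw [← hmm]; exact hfm'⟩
      · exfalso
        have l1 : m < m' := hmono.lt_iff_lt.mp (by omega)
        have l2 : m' < m + 1 := hmono.lt_iff_lt.mp (by omega)
        omega
    · rw [arl_other hne] at h1 h2
      rw [show ([ℓ, a] : List A) = [ℓ] ++ [a] from rfl, factorAt_append,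
        factorAt_singleton, factorAt_singleton] at h1
      norm_num at h1 h2
      obtain ⟨hyp, hya⟩ := h1
      obtain ⟨n, hn1, hn2, hn3⟩ := ha.arl_nonell_pos (p := p + 1) (by rw [hya]; exact hne)
      obtain ⟨m', hm', hfm'⟩ := ih _ h2
      have hmm : m' = n + 1 := hmono.injective (by omega)
      refine ⟨n, by omega, ?_⟩
      rw [factorAt_cons]
      refine ⟨by rw [hn2]; exact hya, ?_⟩
      rw [show n + 1 = m' from hmm.symm]
      exact hfm'

end Anchor

end ARL
section ARL2

variable {A : Type*} [DecidableEq A] {ℓ : A} {x y : ℤ → A} {t : ℤ → ℤ}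

lemma extR_nonempty {x : ℤ → A} {w : List A} (h : IsFactor x w) : (extR x w).Nonempty := by
  obtain ⟨i, hf⟩ := h
  have hfa : FactorAt x i (w ++ [x (i + w.length)]) := by
    rw [factorAt_append]
    exact ⟨hf, by rw [factorAt_singleton]⟩
  exact ⟨x (i + w.length), i, hfa⟩

lemma extL_nonempty {x : ℤ → A} {w : List A} (h : IsFactor x w) : (extL x w).Nonempty := by
  obtain ⟨i, hf⟩ := h
  have hfa : FactorAt x (i - 1) (x (i - 1) :: w) := by
    rw [factorAt_cons]
    exact ⟨rfl, by rw [sub_add_cancel]; exact hf⟩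
  exact ⟨x (i - 1), i - 1, hfa⟩

namespace Anchor

variable (ha : Anchor (ARL ℓ) x y t)
include ha

lemma arl_next (n : ℤ) : y (t n + 1) = x n := by
  rcases ha.arl_block n with ⟨h, hstep⟩ | ⟨-, -, hy1⟩
  · rw [show t n + 1 = t (n + 1) from by omega, ha.arl_start, h]
  · exact hy1

lemma arl_factor_w {v : List A} {m : ℤ} (hv : FactorAt x m v) :
    FactorAt y (t m) (appw (ARL ℓ) v ++ [ℓ]) := by
  obtain ⟨h1, h2⟩ := ha.factor_image v m hv
  rw [factorAt_append]
  refine ⟨h1, ?_⟩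
  rw [factorAt_singleton, ← h2]
  exact ha.arl_start _

lemma arl_encode : ∀ (k : ℕ) (u : List A) (p : ℤ), u.length ≤ k →
    FactorAt y p (ℓ :: u) → (∀ h : u ≠ [], u.getLast h = ℓ) →
    ∃ v m, ℓ :: u = appw (ARL ℓ) v ++ [ℓ] ∧ p = t m ∧ FactorAt x m v := by
  intro k
  induction k with
  | zero =>
    intro u p hlen hf _
    have hu : u = [] := by
      cases u
      · rfl
      · simp at hlen
    subst hu
    rw [factorAt_cons] at hf
    obtain ⟨m, hm⟩ := ha.arl_ell_pos hf.1
    exact ⟨[], m, by simp [appw_nil], hm, factorAt_nil⟩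
  | succ k ih =>
    intro u p hlen hf hlast
    rcases u with _ | ⟨b, u'⟩
    · rw [factorAt_cons] at hf
      obtain ⟨m, hm⟩ := ha.arl_ell_pos hf.1
      exact ⟨[], m, by simp [appw_nil], hm, factorAt_nil⟩
    · rw [factorAt_cons] at hf
      obtain ⟨hyp, hrest⟩ := hf
      obtain ⟨m, rfl⟩ := ha.arl_ell_pos hyp
      have hmono := ha.pre.strictMono (arl_ne ℓ)
      have hb : y (t m + 1) = b := by
        have := factorAt_iff.1 hrest 0 (by simp)
        simpa using this
      rcases ha.arl_block m with ⟨hxm, hstep⟩ | ⟨hxm, hstep, -⟩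
      · -- block of length 1, so b = ℓ
        have hbℓ : b = ℓ := by
          rw [← hb, show t m + 1 = t (m + 1) from by omega]
          exact ha.arl_start _
        rw [hbℓ] at hrest
        have hlast' : ∀ h : u' ≠ [], u'.getLast h = ℓ := by
          intro h
          have := hlast (by simp)
          rw [List.getLast_cons h] at this
          exact this
        obtain ⟨v', m', heq, hm', hfv'⟩ :=
          ih u' (t m + 1) (by simpa using hlen) hrest hlast'
        have hmm : m' = m + 1 := hmono.injective (by omega)
        rw [hbℓ]
        refine ⟨ℓ :: v', m, ?_, rfl, ?_⟩
        · rw [appw_cons, arl_self]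
          simp only [List.cons_append, List.nil_append]
          rw [← heq]
        · rw [factorAt_cons]
          refine ⟨hxm, ?_⟩
          rw [← hmm]
          exact hfv'
      · -- block of length 2
        have hbx : b = x m := by
          rw [← hb, ha.arl_next]
        have hbne : b ≠ ℓ := by rw [hbx]; exact hxm
        rcases u' with _ | ⟨c, u''⟩
        · exact absurd (hlast (by simp)) (by simpa using hbne)
        · rw [factorAt_cons, factorAt_cons] at hrest
          obtain ⟨-, hyc, hrest'⟩ := hrest
          have hcℓ : c = ℓ := by
            rw [← hyc, show t m + 1 + 1 = t (m + 1) from by omega]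
            exact ha.arl_start _
          have hlast' : ∀ h : u'' ≠ [], u''.getLast h = ℓ := by
            intro h
            have := hlast (by simp)
            rw [List.getLast_cons (List.cons_ne_nil _ _), List.getLast_cons h] at this
            exact this
          obtain ⟨v'', m'', heq, hm'', hfv''⟩ :=
            ih u'' (t m + 1 + 1) (by simp at hlen; omega) (by
              rw [factorAt_cons]
              exact ⟨by rw [show t m + 1 + 1 = t (m + 1) from by omega]; exact ha.arl_start _,
                hrest'⟩) hlast'
          have hmm : m'' = m + 1 := hmono.injective (by omega)
          rw [hcℓ]
          refine ⟨b :: v'', m, ?_, rfl, ?_⟩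
          · rw [appw_cons, arl_other hbne]
            simp only [List.cons_append, List.nil_append]
            rw [← heq]
          · rw [factorAt_cons]
            refine ⟨hbx.symm, ?_⟩
            rw [← hmm]
            exact hfv''

lemma arl_extL {v : List A} {m : ℤ} (hv : FactorAt x m v) :
    extL y (appw (ARL ℓ) v ++ [ℓ]) = extL x v := by
  ext c
  simp only [extL, Set.mem_setOf_eq, isFactor_iff]
  constructor
  · rintro ⟨p, hp⟩
    rw [factorAt_cons] at hp
    obtain ⟨hc, hrest⟩ := hp
    obtain ⟨m', hm', hf'⟩ := ha.arl_decode _ _ hrest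
    refine ⟨m' - 1, ?_⟩
    rw [factorAt_cons]
    constructor
    · have hbef := ha.arl_before m'
      rw [show t m' - 1 = p from by omega] at hbef
      rw [← hbef]
      exact hc
    · rw [sub_add_cancel]
      exact hf'
  · rintro ⟨q, hq⟩
    rw [factorAt_cons] at hq
    obtain ⟨hc, hrest⟩ := hq
    refine ⟨t (q + 1) - 1, ?_⟩
    rw [factorAt_cons]
    constructor
    · have hbef := ha.arl_before (q + 1)
      rw [add_sub_cancel_right] at hbef
      rw [hbef, hc]
    · rw [sub_add_cancel]
      exact ha.arl_factor_w hrest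

lemma arl_extR {v : List A} {m : ℤ} (hv : FactorAt x m v) :
    extR y (appw (ARL ℓ) v ++ [ℓ]) = extR x v := by
  ext b
  simp only [extR, Set.mem_setOf_eq, isFactor_iff]
  constructor
  · rintro ⟨p, hp⟩
    rw [factorAt_append, factorAt_singleton] at hp
    obtain ⟨h1, hyb⟩ := hp
    obtain ⟨m', rfl, hf'⟩ := ha.arl_decode _ _ h1
    have hM := (ha.factor_image v m' hf').2
    have hpos : t m' + (((appw (ARL ℓ) v ++ [ℓ]).length : ℕ) : ℤ) = t (m' + v.length) + 1 := by
      simp only [List.length_append, List.length_singleton]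
      push_cast
      omega
    rw [hpos] at hyb
    have hb : b = x (m' + v.length) := by
      rw [← hyb]
      exact ha.arl_next _
    refine ⟨m', ?_⟩
    rw [factorAt_append, factorAt_singleton]
    exact ⟨hf', hb.symm⟩
  · rintro ⟨q, hq⟩
    rw [factorAt_append, factorAt_singleton] at hq
    obtain ⟨h1, h2⟩ := hq
    refine ⟨t q, ?_⟩
    rw [factorAt_append, factorAt_singleton]
    refine ⟨ha.arl_factor_w h1, ?_⟩
    have hM := (ha.factor_image v q h1).2
    have hpos : t q + (((appw (ARL ℓ) v ++ [ℓ]).length : ℕ) : ℤ) = t (q + v.length) + 1 := by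
      simp only [List.length_append, List.length_singleton]
      push_cast
      omega
    rw [hpos, ha.arl_next]
    exact h2

lemma arl_extB {v : List A} {m : ℤ} (hv : FactorAt x m v) :
    extB y (appw (ARL ℓ) v ++ [ℓ]) = extB x v := by
  ext ⟨c, b⟩
  simp only [extB, Set.mem_setOf_eq, isFactor_iff]
  constructor
  · rintro ⟨p, hp⟩
    rw [factorAt_cons, factorAt_append, factorAt_singleton] at hp
    obtain ⟨hc, h1, hyb⟩ := hp
    obtain ⟨m', hm', hf'⟩ := ha.arl_decode _ _ h1
    have hM := (ha.factor_image v m' hf').2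
    refine ⟨m' - 1, ?_⟩
    rw [factorAt_cons, factorAt_append, factorAt_singleton]
    refine ⟨?_, ?_, ?_⟩
    · have hbef := ha.arl_before m'
      rw [show t m' - 1 = p from by omega] at hbef
      rw [← hbef]
      exact hc
    · rw [sub_add_cancel]
      exact hf'
    · rw [sub_add_cancel]
      have hpos : p + 1 + (((appw (ARL ℓ) v ++ [ℓ]).length : ℕ) : ℤ) =
          t (m' + v.length) + 1 := by
        simp only [List.length_append, List.length_singleton]
        push_cast
        omega
      rw [hpos] at hyb
      rw [← hyb]
      exact (ha.arl_next _).symm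
  · rintro ⟨q, hq⟩
    rw [factorAt_cons, factorAt_append, factorAt_singleton] at hq
    obtain ⟨hc, h1, h2⟩ := hq
    refine ⟨t (q + 1) - 1, ?_⟩
    rw [factorAt_cons, factorAt_append, factorAt_singleton]
    refine ⟨?_, ?_, ?_⟩
    · have hbef := ha.arl_before (q + 1)
      rw [add_sub_cancel_right] at hbef
      rw [hbef, hc]
    · rw [sub_add_cancel]
      exact ha.arl_factor_w h1
    · rw [sub_add_cancel]
      have hM := (ha.factor_image v (q + 1) h1).2
      have hpos : t (q + 1) + (((appw (ARL ℓ) v ++ [ℓ]).length : ℕ) : ℤ) =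
          t (q + 1 + v.length) + 1 := by
        simp only [List.length_append, List.length_singleton]
        push_cast
        omega
      rw [hpos, ha.arl_next]
      exact h2

end Anchor

end ARL2
section ARL3

variable {A : Type*} [DecidableEq A] {ℓ : A} {x y : ℤ → A} {t : ℤ → ℤ}

namespace Anchor

variable (ha : Anchor (ARL ℓ) x y t)
include ha

/-- Words starting with a non-`ℓ` letter: left extension is exactly `{ℓ}`. -/
lemma arl_prev {p : ℤ} {a : A} {u : List A} (hne : a ≠ ℓ)
    (hp : FactorAt y p (a :: u)) : y (p - 1) = ℓ ∧ FactorAt y (p - 1) (ℓ :: a :: u) := by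
  rw [factorAt_cons] at hp
  obtain ⟨n, hn1, -, -⟩ := ha.arl_nonell_pos (p := p) (by rw [hp.1]; exact hne)
  have h1 : y (p - 1) = ℓ := by
    rw [show p - 1 = t n from by omega]
    exact ha.arl_start n
  refine ⟨h1, ?_⟩
  rw [factorAt_cons, sub_add_cancel, factorAt_cons]
  exact ⟨h1, hp⟩

lemma arl_star_left {a : A} {u : List A} (hne : a ≠ ℓ) (hfac : IsFactor y (a :: u)) :
    extL y (a :: u) = {ℓ} ∧ extB y (a :: u) = {ℓ} ×ˢ extR y (a :: u) := by
  constructor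
  · ext c
    simp only [extL, Set.mem_setOf_eq, isFactor_iff, Set.mem_singleton_iff]
    constructor
    · rintro ⟨p, hp⟩
      rw [factorAt_cons] at hp
      obtain ⟨hc, hrest⟩ := hp
      have h2 : y (p + 1) = a := (factorAt_cons.1 hrest).1
      obtain ⟨n, hn1, -, -⟩ := ha.arl_nonell_pos (p := p + 1) (by rw [h2]; exact hne)
      rw [← hc, show p = t n from by omega]
      exact ha.arl_start n
    · rintro rfl
      obtain ⟨p, hp⟩ := hfac
      exact ⟨p - 1, (ha.arl_prev hne hp).2⟩
  · ext ⟨c, b⟩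
    simp only [extB, extR, Set.mem_setOf_eq, isFactor_iff, Set.mem_prod,
      Set.mem_singleton_iff, List.cons_append]
    constructor
    · rintro ⟨p, hp⟩
      rw [factorAt_cons] at hp
      obtain ⟨hc, hrest⟩ := hp
      have h2 : y (p + 1) = a := (factorAt_cons.1 hrest).1
      obtain ⟨n, hn1, -, -⟩ := ha.arl_nonell_pos (p := p + 1) (by rw [h2]; exact hne)
      constructor
      · rw [← hc, show p = t n from by omega]
        exact ha.arl_start n
      · exact ⟨p + 1, hrest⟩
    · rintro ⟨rfl, p, hp⟩
      exact ⟨p - 1, (ha.arl_prev hne hp).2⟩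

/-- Words ending with a non-`ℓ` letter. -/
lemma arl_succ {p : ℤ} {a : A} {u : List A} (hne : a ≠ ℓ)
    (hp : FactorAt y p (u ++ [a])) :
    FactorAt y p ((u ++ [a]) ++ [ℓ]) := by
  rw [factorAt_append, factorAt_singleton] at hp
  obtain ⟨h1, h2⟩ := hp
  obtain ⟨n, hn1, -, hn3⟩ := ha.arl_nonell_pos (p := p + u.length) (by rw [h2]; exact hne)
  rw [factorAt_append, factorAt_singleton]
  refine ⟨by rw [factorAt_append, factorAt_singleton]; exact ⟨h1, h2⟩, ?_⟩
  have hlen : p + (((u ++ [a]).length : ℕ) : ℤ) = t (n + 1) := by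
    simp only [List.length_append, List.length_singleton]
    push_cast
    omega
  rw [hlen]
  exact ha.arl_start _

lemma arl_star_right {a : A} {u : List A} (hne : a ≠ ℓ) (hfac : IsFactor y (u ++ [a])) :
    extR y (u ++ [a]) = {ℓ} ∧ extB y (u ++ [a]) = extL y (u ++ [a]) ×ˢ {ℓ} := by
  have key : ∀ p, FactorAt y p (u ++ [a]) →
      y (p + (((u ++ [a]).length : ℕ) : ℤ)) = ℓ := by
    intro p hp
    have := ha.arl_succ hne hp
    rw [factorAt_append, factorAt_singleton] at this
    exact this.2
  constructor
  · ext b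
    simp only [extR, Set.mem_setOf_eq, isFactor_iff, Set.mem_singleton_iff]
    constructor
    · rintro ⟨p, hp⟩
      rw [factorAt_append, factorAt_singleton] at hp
      obtain ⟨h1, h2⟩ := hp
      rw [← h2]
      exact key p h1
    · rintro rfl
      obtain ⟨p, hp⟩ := hfac
      refine ⟨p, ?_⟩
      rw [factorAt_append, factorAt_singleton]
      exact ⟨hp, key p hp⟩
  · ext ⟨c, b⟩
    simp only [extB, extL, Set.mem_setOf_eq, isFactor_iff, Set.mem_prod,
      Set.mem_singleton_iff]
    constructor
    · rintro ⟨p, hp⟩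
      rw [factorAt_cons, factorAt_append, factorAt_singleton] at hp
      obtain ⟨hc, h1, h2⟩ := hp
      constructor
      · refine ⟨p, ?_⟩
        rw [factorAt_cons]
        exact ⟨hc, h1⟩
      · rw [← h2]
        exact key (p + 1) h1
    · rintro ⟨⟨p, hp⟩, rfl⟩
      rw [factorAt_cons] at hp
      obtain ⟨hc, h1⟩ := hp
      refine ⟨p, ?_⟩
      rw [factorAt_cons, factorAt_append, factorAt_singleton]
      exact ⟨hc, h1, key (p + 1) h1⟩

/-- Extensions of the empty word in the image. -/
lemma arl_occurs (hx : Function.Surjective x) (a : A) : ∃ p, y p = a := by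
  rcases eq_or_ne a ℓ with rfl | hne
  · exact ⟨t 0, ha.arl_start 0⟩
  · obtain ⟨n, rfl⟩ := hx a
    exact ⟨t n + 1, ha.arl_next n⟩

lemma arl_extL_nil (hx : Function.Surjective x) : extL y [] = Set.univ := by
  ext a
  simp only [extL, Set.mem_setOf_eq, isFactor_iff, Set.mem_univ, iff_true]
  obtain ⟨p, hp⟩ := ha.arl_occurs hx a
  refine ⟨p, ?_⟩
  rw [show (a :: [] : List A) = [a] from rfl, factorAt_singleton]
  exact hp

lemma arl_extR_nil (hx : Function.Surjective x) : extR y [] = Set.univ := by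
  ext a
  simp only [extR, Set.mem_setOf_eq, isFactor_iff, Set.mem_univ, iff_true]
  obtain ⟨p, hp⟩ := ha.arl_occurs hx a
  refine ⟨p, ?_⟩
  rw [List.nil_append, factorAt_singleton]
  exact hp

lemma arl_extB_nil (hx : Function.Surjective x) :
    extB y [] = {q : A × A | q.1 = ℓ ∨ q.2 = ℓ} := by
  ext ⟨c, b⟩
  simp only [extB, Set.mem_setOf_eq, isFactor_iff, List.nil_append]
  constructor
  · rintro ⟨p, hp⟩
    rw [factorAt_cons, factorAt_singleton] at hp
    obtain ⟨hc, hb⟩ := hp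
    rcases eq_or_ne c ℓ with rfl | hne
    · exact Or.inl rfl
    · obtain ⟨n, -, -, hn3⟩ := ha.arl_nonell_pos (p := p) (by rw [hc]; exact hne)
      right
      rw [← hb, show p + 1 = t (n + 1) from by omega]
      exact ha.arl_start _
  · intro h
    have build : ∀ (q : ℤ), y q = c → y (q + 1) = b →
        ∃ i, FactorAt y i (c :: [b]) := by
      intro q h1 h2
      refine ⟨q, ?_⟩
      rw [factorAt_cons, factorAt_singleton]
      exact ⟨h1, h2⟩
    have hll : ∃ i, FactorAt y i (ℓ :: [ℓ]) := by
      obtain ⟨n, hn⟩ := hx ℓ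
      rcases ha.arl_block n with ⟨-, hstep⟩ | ⟨hxn, -, -⟩
      · refine ⟨t n, ?_⟩
        rw [factorAt_cons, factorAt_singleton]
        refine ⟨ha.arl_start n, ?_⟩
        rw [show t n + 1 = t (n + 1) from by omega]
        exact ha.arl_start _
      · exact absurd hn hxn
    rcases h with hcl | hbl
    · rcases eq_or_ne b ℓ with hbl | hbne
      · rw [hcl, hbl]
        exact hll
      · obtain ⟨n, hn⟩ := hx b
        exact build (t n) (by rw [hcl]; exact ha.arl_start n)
          (by rw [← hn]; exact ha.arl_next n)
    · rcases eq_or_ne c ℓ with hcl | hcne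
      · rw [hcl, hbl]
        exact hll
      · obtain ⟨n, hn⟩ := hx c
        refine build (t n + 1) (by rw [← hn]; exact ha.arl_next n) ?_
        rcases ha.arl_block n with ⟨hxn, -⟩ | ⟨-, hstep, -⟩
        · exact absurd (by rw [← hn, hxn]) hcne
        · rw [hbl, show t n + 1 + 1 = t (n + 1) from by omega]
          exact ha.arl_start _

/-- The main theorem for `L_ℓ`. -/
theorem arl_main (hx : Function.Surjective x) : DendricWord x ↔ DendricWord y := by
  constructor
  · intro hD w hw
    rcases w with _ | ⟨a, u⟩
    · exact dendric_double_star (ha.arl_extL_nil hx) (ha.arl_extR_nil hx)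
        (ha.arl_extB_nil hx)
    · rcases eq_or_ne a ℓ with haℓ | hane
      · rw [haℓ] at hw ⊢
        by_cases hl : (ℓ :: u).getLast (List.cons_ne_nil _ _) = ℓ
        · obtain ⟨p, hp⟩ := hw
          have hlast : ∀ h : u ≠ [], u.getLast h = ℓ := by
            intro h
            rw [← List.getLast_cons h (a := ℓ)]
            exact hl
          obtain ⟨v, m, heq, -, hfv⟩ := ha.arl_encode u.length u p le_rfl hp hlast
          rw [heq]
          exact (dendric_congr (ha.arl_extL hfv).symm (ha.arl_extR hfv).symm
            (ha.arl_extB hfv).symm).1 (hD v hfv.isFactor)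
        · have hdrop := List.dropLast_append_getLast (l := ℓ :: u) (List.cons_ne_nil _ _)
          rw [← hdrop] at hw ⊢
          obtain ⟨h1, h2⟩ := ha.arl_star_right hl hw
          exact dendric_star_right h1 h2 (extL_nonempty hw)
      · obtain ⟨h1, h2⟩ := ha.arl_star_left hane hw
        exact dendric_star_left h1 h2 (extR_nonempty hw)
  · intro hD v hv
    obtain ⟨m, hfv⟩ := hv
    exact (dendric_congr (ha.arl_extL hfv).symm (ha.arl_extR hfv).symm
      (ha.arl_extB hfv).symm).2 (hD _ (ha.arl_factor_w hfv).isFactor)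

end Anchor

end ARL3
section ARR1

variable {A : Type*} [DecidableEq A] {ℓ : A} {x y : ℤ → A} {t : ℤ → ℤ}

lemma arr_ne (ℓ : A) : ∀ a, ARR ℓ a ≠ [] := by
  intro a
  unfold ARR
  split <;> simp

lemma arr_self : ARR ℓ ℓ = [ℓ] := by simp [ARR]

lemma arr_other {a : A} (h : a ≠ ℓ) : ARR ℓ a = [a, ℓ] := by simp [ARR, h]

namespace Anchor

variable (ha : Anchor (ARR ℓ) x y t)
include ha

lemma arr_block (n : ℤ) :
    (x n = ℓ ∧ t (n + 1) = t n + 1 ∧ y (t n) = ℓ) ∨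
    (x n ≠ ℓ ∧ t (n + 1) = t n + 2 ∧ y (t n) = x n ∧ y (t n + 1) = ℓ) := by
  have hs := ha.step n
  have hi := factorAt_iff.1 (ha.img n)
  rcases eq_or_ne (x n) ℓ with h | h
  · left
    refine ⟨h, ?_, ?_⟩
    · rw [h, arr_self] at hs
      simpa using hs
    · have := hi 0 (by simp [h, arr_self])
      simpa [h, arr_self] using this
  · right
    refine ⟨h, ?_, ?_, ?_⟩
    · rw [arr_other h] at hs
      simpa using hs
    · have := hi 0 (by simp [arr_other h])
      simpa [arr_other h] using this
    · have := hi 1 (by simp [arr_other h])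
      simpa [arr_other h] using this

lemma arr_start (n : ℤ) : y (t n) = x n := by
  rcases ha.arr_block n with ⟨h, -, hy⟩ | ⟨-, -, hy, -⟩
  · rw [hy, h]
  · exact hy

lemma arr_end (n : ℤ) : y (t (n + 1) - 1) = ℓ := by
  rcases ha.arr_block n with ⟨-, hstep, hy⟩ | ⟨-, hstep, -, hy⟩
  · rw [show t (n + 1) - 1 = t n from by omega]
    exact hy
  · rw [show t (n + 1) - 1 = t n + 1 from by omega]
    exact hy

lemma arr_after (n : ℤ) : y (t n - 1) = ℓ := by
  have := ha.arr_end (n - 1)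
  rwa [sub_add_cancel] at this

lemma arr_ell_pos {p : ℤ} (hp : y p = ℓ) : ∃ n, p + 1 = t n := by
  obtain ⟨n, h1, h2⟩ := ha.pre.partition (arr_ne ℓ) p
  rcases ha.arr_block n with ⟨-, hstep, -⟩ | ⟨hne, hstep, hy0, hy1⟩
  · exact ⟨n + 1, by omega⟩
  · rcases (by omega : p = t n ∨ p = t n + 1) with h | h
    · rw [h, hy0] at hp
      exact absurd hp hne
    · exact ⟨n + 1, by omega⟩

lemma arr_nonell_pos {p : ℤ} (hp : y p ≠ ℓ) :
    ∃ n, p = t n ∧ x n = y p ∧ t (n + 1) = p + 2 ∧ y (p + 1) = ℓ := by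
  obtain ⟨n, h1, h2⟩ := ha.pre.partition (arr_ne ℓ) p
  rcases ha.arr_block n with ⟨-, hstep, hy⟩ | ⟨hne, hstep, hy0, hy1⟩
  · have : p = t n := by omega
    rw [this] at hp
    exact absurd hy hp
  · rcases (by omega : p = t n ∨ p = t n + 1) with h | h
    · refine ⟨n, h, ?_, by omega, ?_⟩
      · rw [h]
        exact hy0.symm
      · rw [h]
        exact hy1
    · rw [h] at hp
      exact absurd hy1 hp

lemma arr_before (n : ℤ) : y (t n - 2) = x (n - 1) := by
  have hb := ha.arr_block (n - 1)
  rw [sub_add_cancel] at hb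
  rcases hb with ⟨h, hstep, -⟩ | ⟨-, hstep, hy0, -⟩
  · rw [show t n - 2 = t (n - 1) - 1 from by omega, ha.arr_after, h]
  · rw [show t n - 2 = t (n - 1) from by omega, hy0]

lemma arr_decode : ∀ (v : List A) (p : ℤ),
    FactorAt y p ([ℓ] ++ appw (ARR ℓ) v) → ∃ m, p + 1 = t m ∧ FactorAt x m v := by
  intro v
  induction v with
  | nil =>
    intro p hp
    rw [appw_nil, List.append_nil, factorAt_singleton] at hp
    obtain ⟨m, hm⟩ := ha.arr_ell_pos hp
    exact ⟨m, hm, factorAt_nil⟩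
  | cons a v ih =>
    intro p hp
    rw [appw_cons, ← List.append_assoc, factorAt_append] at hp
    obtain ⟨h1, h2⟩ := hp
    have hmono := ha.pre.strictMono (arr_ne ℓ)
    rcases eq_or_ne a ℓ with haℓ | hne
    · rw [haℓ, arr_self] at h1 h2
      rw [factorAt_append, factorAt_singleton, factorAt_singleton] at h1
      obtain ⟨hyp, hyp1⟩ := h1
      norm_num at hyp1 h2
      obtain ⟨m, hm⟩ := ha.arr_ell_pos hyp
      obtain ⟨m', hm', hfm'⟩ := ih (p + 1) (by
        rw [factorAt_append, factorAt_singleton]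
        constructor
        · exact hyp1
        · norm_num
          rw [show p + 1 + 1 = p + 2 from by ring]
          exact h2)
      rcases ha.arr_block m with ⟨hxm, hstep, -⟩ | ⟨hxm, hstep, -, -⟩
      · have hmm : m' = m + 1 := hmono.injective (by omega)
        refine ⟨m, hm, ?_⟩
        rw [factorAt_cons]
        refine ⟨by rw [haℓ]; exact hxm, ?_⟩
        rw [← hmm]
        exact hfm'
      · exfalso
        have l1 : m < m' := hmono.lt_iff_lt.mp (by omega)
        have l2 : m' < m + 1 := hmono.lt_iff_lt.mp (by omega)
        omega
    · rw [arr_other hne] at h1 h2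
      rw [show ([ℓ] ++ [a, ℓ] : List A) = [ℓ] ++ ([a] ++ [ℓ]) from rfl,
        factorAt_append, factorAt_append, factorAt_singleton, factorAt_singleton,
        factorAt_singleton] at h1
      obtain ⟨hyp, hya, hyℓ⟩ := h1
      norm_num at hya hyℓ h2
      obtain ⟨n, hn1, hn2, hn3, -⟩ := ha.arr_nonell_pos (p := p + 1) (by rw [hya]; exact hne)
      obtain ⟨m', hm', hfm'⟩ := ih (p + 2) (by
        rw [factorAt_append, factorAt_singleton]
        constructor
        · rw [show (p + 2 : ℤ) = p + 1 + 1 from by ring]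
          exact hyℓ
        · norm_num
          rw [show p + 2 + 1 = p + 3 from by ring]
          exact h2)
      have hmm : m' = n + 1 := hmono.injective (by omega)
      refine ⟨n, by omega, ?_⟩
      rw [factorAt_cons]
      refine ⟨by rw [hn2]; exact hya, ?_⟩
      rw [← hmm]
      exact hfm'

end Anchor

end ARR1
section ARR2

variable {A : Type*} [DecidableEq A] {ℓ : A} {x y : ℤ → A} {t : ℤ → ℤ}

namespace Anchor

variable (ha : Anchor (ARR ℓ) x y t)
include ha

lemma arr_factor_w {v : List A} {m : ℤ} (hv : FactorAt x m v) :
    FactorAt y (t m - 1) ([ℓ] ++ appw (ARR ℓ) v) := by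
  rw [factorAt_append, factorAt_singleton]
  refine ⟨ha.arr_after m, ?_⟩
  rw [show t m - 1 + (([ℓ] : List A).length : ℕ) = t m from by simp]
  exact (ha.factor_image v m hv).1

lemma arr_encode : ∀ (k : ℕ) (u : List A) (p : ℤ), u.length ≤ k →
    FactorAt y p (ℓ :: u) → (∀ h : u ≠ [], u.getLast h = ℓ) →
    ∃ v m, ℓ :: u = [ℓ] ++ appw (ARR ℓ) v ∧ p + 1 = t m ∧ FactorAt x m v := by
  intro k
  induction k with
  | zero =>
    intro u p hlen hf _
    have hu : u = [] := by
      cases u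
      · rfl
      · simp at hlen
    subst hu
    rw [factorAt_cons] at hf
    obtain ⟨m, hm⟩ := ha.arr_ell_pos hf.1
    exact ⟨[], m, by simp [appw_nil], hm, factorAt_nil⟩
  | succ k ih =>
    intro u p hlen hf hlast
    rcases u with _ | ⟨b, u'⟩
    · rw [factorAt_cons] at hf
      obtain ⟨m, hm⟩ := ha.arr_ell_pos hf.1
      exact ⟨[], m, by simp [appw_nil], hm, factorAt_nil⟩
    · rw [factorAt_cons] at hf
      obtain ⟨hyp, hrest⟩ := hf
      obtain ⟨m, hm⟩ := ha.arr_ell_pos hyp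
      have hmono := ha.pre.strictMono (arr_ne ℓ)
      have hb : y (p + 1) = b := by
        have := factorAt_iff.1 hrest 0 (by simp)
        simpa using this
      have hbx : b = x m := by
        rw [← hb, show p + 1 = t m from hm, ha.arr_start]
      rcases ha.arr_block m with ⟨hxm, hstep, -⟩ | ⟨hxm, hstep, -, hy1⟩
      · have hbℓ : b = ℓ := by rw [hbx, hxm]
        rw [hbℓ] at hrest
        have hlast' : ∀ h : u' ≠ [], u'.getLast h = ℓ := by
          intro h
          have := hlast (by simp)
          rw [List.getLast_cons h] at this
          exact this
        obtain ⟨v', m', heq, hm', hfv'⟩ :=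
          ih u' (p + 1) (by simpa using hlen) hrest hlast'
        have hmm : m' = m + 1 := hmono.injective (by omega)
        have heq' : u' = appw (ARR ℓ) v' := by simpa using heq
        rw [hbℓ]
        refine ⟨ℓ :: v', m, ?_, hm, ?_⟩
        · rw [appw_cons, arr_self]
          simp only [List.cons_append, List.nil_append, List.singleton_append]
          rw [heq']
        · rw [factorAt_cons]
          refine ⟨hxm, ?_⟩
          rw [← hmm]
          exact hfv'
      · have hbne : b ≠ ℓ := by rw [hbx]; exact hxm
        rcases u' with _ | ⟨c, u''⟩
        · exact absurd (hlast (by simp)) (by simpa using hbne)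
        · rw [factorAt_cons, factorAt_cons] at hrest
          obtain ⟨-, hyc, hrest'⟩ := hrest
          have hcℓ : c = ℓ := by
            rw [← hyc, show p + 1 + 1 = t m + 1 from by omega]
            exact hy1
          have hlast' : ∀ h : u'' ≠ [], u''.getLast h = ℓ := by
            intro h
            have := hlast (by simp)
            rw [List.getLast_cons (List.cons_ne_nil _ _), List.getLast_cons h] at this
            exact this
          obtain ⟨v'', m'', heq, hm'', hfv''⟩ :=
            ih u'' (p + 1 + 1) (by simp at hlen; omega) (by
              rw [factorAt_cons]
              refine ⟨by rw [show p + 1 + 1 = t m + 1 from by omega]; exact hy1, ?_⟩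
              exact hrest') hlast'
          have hmm : m'' = m + 1 := hmono.injective (by omega)
          have heq' : u'' = appw (ARR ℓ) v'' := by simpa using heq
          rw [hcℓ]
          refine ⟨b :: v'', m, ?_, hm, ?_⟩
          · rw [appw_cons, arr_other hbne]
            simp only [List.cons_append, List.nil_append, List.singleton_append]
            rw [heq']
          · rw [factorAt_cons]
            refine ⟨hbx.symm, ?_⟩
            rw [← hmm]
            exact hfv''

lemma arr_extL {v : List A} {m : ℤ} (hv : FactorAt x m v) :
    extL y ([ℓ] ++ appw (ARR ℓ) v) = extL x v := by
  ext c
  simp only [extL, Set.mem_setOf_eq, isFactor_iff]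
  constructor
  · rintro ⟨p, hp⟩
    rw [factorAt_cons] at hp
    obtain ⟨hc, hrest⟩ := hp
    obtain ⟨m', hm', hf'⟩ := ha.arr_decode _ _ hrest
    refine ⟨m' - 1, ?_⟩
    rw [factorAt_cons]
    constructor
    · have hbef := ha.arr_before m'
      rw [show t m' - 2 = p from by omega] at hbef
      rw [← hbef]
      exact hc
    · rw [sub_add_cancel]
      exact hf'
  · rintro ⟨q, hq⟩
    rw [factorAt_cons] at hq
    obtain ⟨hc, hrest⟩ := hq
    refine ⟨t (q + 1) - 2, ?_⟩
    rw [factorAt_cons]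
    constructor
    · have hbef := ha.arr_before (q + 1)
      rw [add_sub_cancel_right] at hbef
      rw [hbef, hc]
    · rw [show t (q + 1) - 2 + 1 = t (q + 1) - 1 from by ring]
      exact ha.arr_factor_w hrest

lemma arr_extR {v : List A} {m : ℤ} (hv : FactorAt x m v) :
    extR y ([ℓ] ++ appw (ARR ℓ) v) = extR x v := by
  ext b
  simp only [extR, Set.mem_setOf_eq, isFactor_iff]
  constructor
  · rintro ⟨p, hp⟩
    rw [factorAt_append, factorAt_singleton] at hp
    obtain ⟨h1, hyb⟩ := hp
    obtain ⟨m', hm', hf'⟩ := ha.arr_decode _ _ h1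
    have hM := (ha.factor_image v m' hf').2
    have hpos : p + ((([ℓ] ++ appw (ARR ℓ) v).length : ℕ) : ℤ) = t (m' + v.length) := by
      simp only [List.length_append, List.length_singleton]
      push_cast
      omega
    rw [hpos, ha.arr_start] at hyb
    refine ⟨m', ?_⟩
    rw [factorAt_append, factorAt_singleton]
    exact ⟨hf', hyb⟩
  · rintro ⟨q, hq⟩
    rw [factorAt_append, factorAt_singleton] at hq
    obtain ⟨h1, h2⟩ := hq
    refine ⟨t q - 1, ?_⟩
    rw [factorAt_append, factorAt_singleton]
    refine ⟨ha.arr_factor_w h1, ?_⟩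
    have hM := (ha.factor_image v q h1).2
    have hpos : t q - 1 + ((([ℓ] ++ appw (ARR ℓ) v).length : ℕ) : ℤ) = t (q + v.length) := by
      simp only [List.length_append, List.length_singleton]
      push_cast
      omega
    rw [hpos, ha.arr_start]
    exact h2

lemma arr_extB {v : List A} {m : ℤ} (hv : FactorAt x m v) :
    extB y ([ℓ] ++ appw (ARR ℓ) v) = extB x v := by
  ext ⟨c, b⟩
  simp only [extB, Set.mem_setOf_eq, isFactor_iff]
  constructor
  · rintro ⟨p, hp⟩
    rw [factorAt_cons, factorAt_append, factorAt_singleton] at hp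
    obtain ⟨hc, h1, hyb⟩ := hp
    obtain ⟨m', hm', hf'⟩ := ha.arr_decode _ _ h1
    have hM := (ha.factor_image v m' hf').2
    refine ⟨m' - 1, ?_⟩
    rw [factorAt_cons, factorAt_append, factorAt_singleton]
    refine ⟨?_, ?_, ?_⟩
    · have hbef := ha.arr_before m'
      rw [show t m' - 2 = p from by omega] at hbef
      rw [← hbef]
      exact hc
    · rw [sub_add_cancel]
      exact hf'
    · rw [sub_add_cancel]
      have hpos : p + 1 + ((([ℓ] ++ appw (ARR ℓ) v).length : ℕ) : ℤ) =
          t (m' + v.length) := by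
        simp only [List.length_append, List.length_singleton]
        push_cast
        omega
      rw [hpos, ha.arr_start] at hyb
      exact hyb
  · rintro ⟨q, hq⟩
    rw [factorAt_cons, factorAt_append, factorAt_singleton] at hq
    obtain ⟨hc, h1, h2⟩ := hq
    refine ⟨t (q + 1) - 2, ?_⟩
    rw [factorAt_cons, factorAt_append, factorAt_singleton]
    refine ⟨?_, ?_, ?_⟩
    · have hbef := ha.arr_before (q + 1)
      rw [add_sub_cancel_right] at hbef
      rw [hbef, hc]
    · rw [show t (q + 1) - 2 + 1 = t (q + 1) - 1 from by ring]
      exact ha.arr_factor_w h1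
    · have hM := (ha.factor_image v (q + 1) h1).2
      have hpos : t (q + 1) - 2 + 1 + ((([ℓ] ++ appw (ARR ℓ) v).length : ℕ) : ℤ) =
          t (q + 1 + v.length) := by
        simp only [List.length_append, List.length_singleton]
        push_cast
        omega
      rw [hpos, ha.arr_start]
      exact h2

end Anchor

end ARR2
section ARR3

variable {A : Type*} [DecidableEq A] {ℓ : A} {x y : ℤ → A} {t : ℤ → ℤ}

namespace Anchor

variable (ha : Anchor (ARR ℓ) x y t)
include ha

lemma arr_prev {p : ℤ} {a : A} {u : List A} (hne : a ≠ ℓ)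
    (hp : FactorAt y p (a :: u)) : y (p - 1) = ℓ ∧ FactorAt y (p - 1) (ℓ :: a :: u) := by
  rw [factorAt_cons] at hp
  obtain ⟨n, hn1, -, -, -⟩ := ha.arr_nonell_pos (p := p) (by rw [hp.1]; exact hne)
  have h1 : y (p - 1) = ℓ := by
    rw [show p - 1 = t n - 1 from by omega]
    exact ha.arr_after n
  refine ⟨h1, ?_⟩
  rw [factorAt_cons, sub_add_cancel, factorAt_cons]
  exact ⟨h1, hp⟩

lemma arr_star_left {a : A} {u : List A} (hne : a ≠ ℓ) (hfac : IsFactor y (a :: u)) :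
    extL y (a :: u) = {ℓ} ∧ extB y (a :: u) = {ℓ} ×ˢ extR y (a :: u) := by
  constructor
  · ext c
    simp only [extL, Set.mem_setOf_eq, isFactor_iff, Set.mem_singleton_iff]
    constructor
    · rintro ⟨p, hp⟩
      rw [factorAt_cons] at hp
      obtain ⟨hc, hrest⟩ := hp
      have h2 : y (p + 1) = a := (factorAt_cons.1 hrest).1
      obtain ⟨n, hn1, -, -, -⟩ := ha.arr_nonell_pos (p := p + 1) (by rw [h2]; exact hne)
      rw [← hc, show p = t n - 1 from by omega]
      exact ha.arr_after n
    · rintro rfl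
      obtain ⟨p, hp⟩ := hfac
      exact ⟨p - 1, (ha.arr_prev hne hp).2⟩
  · ext ⟨c, b⟩
    simp only [extB, extR, Set.mem_setOf_eq, isFactor_iff, Set.mem_prod,
      Set.mem_singleton_iff, List.cons_append]
    constructor
    · rintro ⟨p, hp⟩
      rw [factorAt_cons] at hp
      obtain ⟨hc, hrest⟩ := hp
      have h2 : y (p + 1) = a := (factorAt_cons.1 hrest).1
      obtain ⟨n, hn1, -, -, -⟩ := ha.arr_nonell_pos (p := p + 1) (by rw [h2]; exact hne)
      constructor
      · rw [← hc, show p = t n - 1 from by omega]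
        exact ha.arr_after n
      · exact ⟨p + 1, hrest⟩
    · rintro ⟨rfl, p, hp⟩
      exact ⟨p - 1, (ha.arr_prev hne hp).2⟩

lemma arr_succ {p : ℤ} {a : A} {u : List A} (hne : a ≠ ℓ)
    (hp : FactorAt y p (u ++ [a])) :
    FactorAt y p ((u ++ [a]) ++ [ℓ]) := by
  rw [factorAt_append, factorAt_singleton] at hp
  obtain ⟨h1, h2⟩ := hp
  obtain ⟨n, hn1, -, -, hn4⟩ := ha.arr_nonell_pos (p := p + u.length) (by rw [h2]; exact hne)
  rw [factorAt_append, factorAt_singleton]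
  refine ⟨by rw [factorAt_append, factorAt_singleton]; exact ⟨h1, h2⟩, ?_⟩
  have hlen : p + (((u ++ [a]).length : ℕ) : ℤ) = p + u.length + 1 := by
    simp only [List.length_append, List.length_singleton]
    push_cast
    omega
  rw [hlen]
  exact hn4

lemma arr_star_right {a : A} {u : List A} (hne : a ≠ ℓ) (hfac : IsFactor y (u ++ [a])) :
    extR y (u ++ [a]) = {ℓ} ∧ extB y (u ++ [a]) = extL y (u ++ [a]) ×ˢ {ℓ} := by
  have key : ∀ p, FactorAt y p (u ++ [a]) →
      y (p + (((u ++ [a]).length : ℕ) : ℤ)) = ℓ := by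
    intro p hp
    have := ha.arr_succ hne hp
    rw [factorAt_append, factorAt_singleton] at this
    exact this.2
  constructor
  · ext b
    simp only [extR, Set.mem_setOf_eq, isFactor_iff, Set.mem_singleton_iff]
    constructor
    · rintro ⟨p, hp⟩
      rw [factorAt_append, factorAt_singleton] at hp
      obtain ⟨h1, h2⟩ := hp
      rw [← h2]
      exact key p h1
    · rintro rfl
      obtain ⟨p, hp⟩ := hfac
      refine ⟨p, ?_⟩
      rw [factorAt_append, factorAt_singleton]
      exact ⟨hp, key p hp⟩
  · ext ⟨c, b⟩
    simp only [extB, extL, Set.mem_setOf_eq, isFactor_iff, Set.mem_prod,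
      Set.mem_singleton_iff]
    constructor
    · rintro ⟨p, hp⟩
      rw [factorAt_cons, factorAt_append, factorAt_singleton] at hp
      obtain ⟨hc, h1, h2⟩ := hp
      constructor
      · refine ⟨p, ?_⟩
        rw [factorAt_cons]
        exact ⟨hc, h1⟩
      · rw [← h2]
        exact key (p + 1) h1
    · rintro ⟨⟨p, hp⟩, rfl⟩
      rw [factorAt_cons] at hp
      obtain ⟨hc, h1⟩ := hp
      refine ⟨p, ?_⟩
      rw [factorAt_cons, factorAt_append, factorAt_singleton]
      exact ⟨hc, h1, key (p + 1) h1⟩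

lemma arr_occurs (hx : Function.Surjective x) (a : A) : ∃ p, y p = a := by
  rcases eq_or_ne a ℓ with rfl | hne
  · exact ⟨t 0 - 1, ha.arr_after 0⟩
  · obtain ⟨n, rfl⟩ := hx a
    exact ⟨t n, ha.arr_start n⟩

lemma arr_extL_nil (hx : Function.Surjective x) : extL y [] = Set.univ := by
  ext a
  simp only [extL, Set.mem_setOf_eq, isFactor_iff, Set.mem_univ, iff_true]
  obtain ⟨p, hp⟩ := ha.arr_occurs hx a
  refine ⟨p, ?_⟩
  rw [show (a :: [] : List A) = [a] from rfl, factorAt_singleton]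
  exact hp

lemma arr_extR_nil (hx : Function.Surjective x) : extR y [] = Set.univ := by
  ext a
  simp only [extR, Set.mem_setOf_eq, isFactor_iff, Set.mem_univ, iff_true]
  obtain ⟨p, hp⟩ := ha.arr_occurs hx a
  refine ⟨p, ?_⟩
  rw [List.nil_append, factorAt_singleton]
  exact hp

lemma arr_extB_nil (hx : Function.Surjective x) :
    extB y [] = {q : A × A | q.1 = ℓ ∨ q.2 = ℓ} := by
  ext ⟨c, b⟩
  simp only [extB, Set.mem_setOf_eq, isFactor_iff, List.nil_append]
  constructor
  · rintro ⟨p, hp⟩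
    rw [factorAt_cons, factorAt_singleton] at hp
    obtain ⟨hc, hb⟩ := hp
    rcases eq_or_ne c ℓ with rfl | hne
    · exact Or.inl rfl
    · obtain ⟨n, -, -, -, hn4⟩ := ha.arr_nonell_pos (p := p) (by rw [hc]; exact hne)
      right
      rw [← hb]
      exact hn4
  · intro h
    have build : ∀ (q : ℤ), y q = c → y (q + 1) = b →
        ∃ i, FactorAt y i (c :: [b]) := by
      intro q h1 h2
      refine ⟨q, ?_⟩
      rw [factorAt_cons, factorAt_singleton]
      exact ⟨h1, h2⟩
    rcases h with hcl | hbl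
    · obtain ⟨n, hn⟩ := hx b
      refine build (t n - 1) (by rw [hcl]; exact ha.arr_after n) ?_
      rw [sub_add_cancel, ha.arr_start]
      exact hn
    · rcases eq_or_ne c ℓ with hcl | hcne
      · obtain ⟨n, hn⟩ := hx ℓ
        refine build (t n - 1) (by rw [hcl]; exact ha.arr_after n) ?_
        rw [sub_add_cancel, ha.arr_start, hn, hbl]
      · obtain ⟨n, hn⟩ := hx c
        refine build (t n) (by rw [ha.arr_start]; exact hn) ?_
        rcases ha.arr_block n with ⟨hxn, -, -⟩ | ⟨-, -, -, hy1⟩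
        · exact absurd (by rw [← hn, hxn]) hcne
        · rw [hbl]
          exact hy1

/-- The main theorem for `R_ℓ`. -/
theorem arr_main (hx : Function.Surjective x) : DendricWord x ↔ DendricWord y := by
  constructor
  · intro hD w hw
    rcases w with _ | ⟨a, u⟩
    · exact dendric_double_star (ha.arr_extL_nil hx) (ha.arr_extR_nil hx)
        (ha.arr_extB_nil hx)
    · rcases eq_or_ne a ℓ with haℓ | hane
      · rw [haℓ] at hw ⊢
        by_cases hl : (ℓ :: u).getLast (List.cons_ne_nil _ _) = ℓ
        · obtain ⟨p, hp⟩ := hw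
          have hlast : ∀ h : u ≠ [], u.getLast h = ℓ := by
            intro h
            rw [← List.getLast_cons h (a := ℓ)]
            exact hl
          obtain ⟨v, m, heq, -, hfv⟩ := ha.arr_encode u.length u p le_rfl hp hlast
          rw [heq]
          exact (dendric_congr (ha.arr_extL hfv).symm (ha.arr_extR hfv).symm
            (ha.arr_extB hfv).symm).1 (hD v hfv.isFactor)
        · have hdrop := List.dropLast_append_getLast (l := ℓ :: u) (List.cons_ne_nil _ _)
          rw [← hdrop] at hw ⊢
          obtain ⟨h1, h2⟩ := ha.arr_star_right hl hw
          exact dendric_star_right h1 h2 (extL_nonempty hw)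
      · obtain ⟨h1, h2⟩ := ha.arr_star_left hane hw
        exact dendric_star_left h1 h2 (extR_nonempty hw)
  · intro hD v hv
    obtain ⟨m, hfv⟩ := hv
    exact (dendric_congr (ha.arr_extL hfv).symm (ha.arr_extR hfv).symm
      (ha.arr_extB hfv).symm).2 (hD _ (ha.arr_factor_w hfv).isFactor)

end Anchor

end ARR3

theorem stmt13 [Fintype A] [Fintype B] [DecidableEq A] [DecidableEq B]
    (hA : 2 ≤ Fintype.card A) (hB : 2 ≤ Fintype.card B) :
    -- x is dendric iff L_ℓ(x) is, iff R_ℓ(x) is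
    (∀ (x : ℤ → A), Function.Surjective x → ∀ ℓ : A, ∀ y : ℤ → A,
      (IsImage (ARL ℓ) x y → (DendricWord x ↔ DendricWord y)) ∧
      (IsImage (ARR ℓ) x y → (DendricWord x ↔ DendricWord y))) ∧
    -- τ is dendric preserving iff L_ℓ ∘ τ is, iff R_ℓ ∘ τ is
    (∀ τ : A → List B, (∀ a, τ a ≠ []) → (∀ b, ∃ a, b ∈ τ a) → ∀ ℓ : B,
      (DendricPreserving τ ↔ DendricPreserving (mcomp (ARL ℓ) τ)) ∧
      (DendricPreserving τ ↔ DendricPreserving (mcomp (ARR ℓ) τ))) := by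
  constructor
  · intro x hx ℓ y
    constructor
    · intro himg
      rw [isImage_iff_anchor] at himg
      obtain ⟨t, ha⟩ := himg
      exact ha.arl_main hx
    · intro himg
      rw [isImage_iff_anchor] at himg
      obtain ⟨t, ha⟩ := himg
      exact ha.arr_main hx
  · intro τ hτ1 hτ2 ℓ
    constructor
    · constructor
      · intro hDP x hxs hxD y himg
        obtain ⟨z, hz⟩ := image_exists hτ1 x
        obtain ⟨y', hy'⟩ := image_exists (arl_ne ℓ) z
        have hcomp : IsImage (mcomp (ARL ℓ) τ) x y' := isImage_comp hz hy'
        have hyy : y = y' := image_unique (mcomp_ne_nil (arl_ne ℓ) hτ1) himg hcomp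
        have hDz : DendricWord z := hDP x hxs hxD z hz
        have hzs : Function.Surjective z := hz.surjective hxs hτ2
        rw [isImage_iff_anchor] at hy'
        obtain ⟨t, haz⟩ := hy'
        rw [hyy]
        exact (haz.arl_main hzs).1 hDz
      · intro hDP x hxs hxD z himgz
        obtain ⟨y', hy'⟩ := image_exists (arl_ne ℓ) z
        have hcomp : IsImage (mcomp (ARL ℓ) τ) x y' := isImage_comp himgz hy'
        have hDy' := hDP x hxs hxD y' hcomp
        have hzs : Function.Surjective z := himgz.surjective hxs hτ2
        rw [isImage_iff_anchor] at hy'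
        obtain ⟨t, haz⟩ := hy'
        exact (haz.arl_main hzs).2 hDy'
    · constructor
      · intro hDP x hxs hxD y himg
        obtain ⟨z, hz⟩ := image_exists hτ1 x
        obtain ⟨y', hy'⟩ := image_exists (arr_ne ℓ) z
        have hcomp : IsImage (mcomp (ARR ℓ) τ) x y' := isImage_comp hz hy'
        have hyy : y = y' := image_unique (mcomp_ne_nil (arr_ne ℓ) hτ1) himg hcomp
        have hDz : DendricWord z := hDP x hxs hxD z hz
        have hzs : Function.Surjective z := hz.surjective hxs hτ2
        rw [isImage_iff_anchor] at hy'
        obtain ⟨t, haz⟩ := hy'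
        rw [hyy]
        exact (haz.arr_main hzs).1 hDz
      · intro hDP x hxs hxD z himgz
        obtain ⟨y', hy'⟩ := image_exists (arr_ne ℓ) z
        have hcomp : IsImage (mcomp (ARR ℓ) τ) x y' := isImage_comp himgz hy'
        have hDy' := hDP x hxs hxD y' hcomp
        have hzs : Function.Surjective z := himgz.surjective hxs hτ2
        rw [isImage_iff_anchor] at hy'
        obtain ⟨t, haz⟩ := hy'
        exact (haz.arr_main hzs).2 hDy'
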